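/- arXiv:1807.11476 — 6 statements merged into one kernel-verified Lean document; each statement's English description precedes it below -/
import Mathlib

section
/- Let γ ∈ [0,1], P ∈ [0,1] and define the interaction function I(v,w) := P(1−v) + (1−P)(Pw − v). Suppose c > 0, η ∈ ℝ satisfies |η| ≤ c(1−γ), and D : [0,1] → [0,∞) satisfies c·D(v) ≤ min{v, 1−v} for all v ∈ [0,1]. Then for every pair of pre-interaction speeds v, w ∈ [0,1], the post-interaction speed v' := v + γ·I(v,w) + D(v)·η satisfies 0 ≤ v' ≤ 1. -/
/-- Proposition 2.1: physical bounds on the post-interaction speed in the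
uncontrolled binary interaction rule. -/
theorem post_interaction_speed_bounds
    (γ P c η : ℝ) (D : ℝ → ℝ)
    (hγ : γ ∈ Set.Icc (0:ℝ) 1) (hP : P ∈ Set.Icc (0:ℝ) 1)
    (hc : 0 < c) (hη : |η| ≤ c * (1 - γ))
    (hDnonneg : ∀ v ∈ Set.Icc (0:ℝ) 1, 0 ≤ D v)
    (hD : ∀ v ∈ Set.Icc (0:ℝ) 1, c * D v ≤ min v (1 - v)) :
    ∀ v ∈ Set.Icc (0:ℝ) 1, ∀ w ∈ Set.Icc (0:ℝ) 1,
      v + γ * (P * (1 - v) + (1 - P) * (P * w - v)) + D v * η ∈ Set.Icc (0:ℝ) 1 := by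
  intro v hv w hw
  obtain ⟨hγ0, hγ1⟩ := hγ
  obtain ⟨hP0, hP1⟩ := hP
  obtain ⟨hv0, hv1⟩ := hv
  obtain ⟨hw0, hw1⟩ := hw
  have hDv := hDnonneg v ⟨hv0, hv1⟩
  have hDle := hD v ⟨hv0, hv1⟩
  have h1 : c * D v ≤ v := le_trans hDle (min_le_left _ _)
  have h2 : c * D v ≤ 1 - v := le_trans hDle (min_le_right _ _)
  have hηl : -(c * (1 - γ)) ≤ η := neg_le_of_abs_le hη
  have hηu : η ≤ c * (1 - γ) := le_of_abs_le hη
  have hl : -(D v * (c * (1 - γ))) ≤ D v * η := by nlinarith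
  have hu : D v * η ≤ D v * (c * (1 - γ)) := by nlinarith
  constructor
  · nlinarith [mul_nonneg hP0 (mul_nonneg (sub_nonneg.2 hP1) hw0),
      mul_le_mul_of_nonneg_left h1 (sub_nonneg.2 hγ1)]
  · nlinarith [mul_le_mul_of_nonneg_left h2 (sub_nonneg.2 hγ1),
      mul_nonneg (mul_nonneg hP0 (sub_nonneg.2 hP1)) (sub_nonneg.2 hw1),
      mul_nonneg hγ0 (mul_nonneg (sub_nonneg.2 hP1) (sub_nonneg.2 hP1))]
end

section
/- Let γ ∈ [0,1], ν > 0, P ∈ [0,1], V_d ∈ [0,1], Θ ∈ {0,1}, and define I(v,w) := P(1−v) + (1−P)(Pw − v). Suppose c > 0, η ∈ ℝ satisfies |η| ≤ c(1 − γ(ν+γ)/(ν+γ²)), and D : [0,1] → [0,∞) satisfies c·D(v) ≤ min{v, 1−v} for all v ∈ [0,1]. Then for every v, w ∈ [0,1] the controlled post-interaction speed v' := v + (νγ/(ν+γ²Θ²))·I(v,w) + (γ²Θ²/(ν+γ²Θ²))·(V_d − v) + D(v)·η satisfies 0 ≤ v' ≤ 1. -/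
set_option maxHeartbeats 1600000 in
/-- Proposition 3.1: physical bounds on the post-interaction speed in the
feedback-controlled binary interaction rule. -/
theorem controlled_post_interaction_speed_bounds
    (γ ν P Vd Θ c η : ℝ) (D : ℝ → ℝ)
    (hγ : γ ∈ Set.Icc (0:ℝ) 1) (hν : 0 < ν)
    (hP : P ∈ Set.Icc (0:ℝ) 1) (hVd : Vd ∈ Set.Icc (0:ℝ) 1)
    (hΘ : Θ = 0 ∨ Θ = 1)
    (hc : 0 < c) (hη : |η| ≤ c * (1 - γ * (ν + γ) / (ν + γ ^ 2)))
    (hDnonneg : ∀ v ∈ Set.Icc (0:ℝ) 1, 0 ≤ D v)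
    (hD : ∀ v ∈ Set.Icc (0:ℝ) 1, c * D v ≤ min v (1 - v)) :
    ∀ v ∈ Set.Icc (0:ℝ) 1, ∀ w ∈ Set.Icc (0:ℝ) 1,
      v + (ν * γ / (ν + γ ^ 2 * Θ ^ 2)) * (P * (1 - v) + (1 - P) * (P * w - v))
        + (γ ^ 2 * Θ ^ 2 / (ν + γ ^ 2 * Θ ^ 2)) * (Vd - v) + D v * η
      ∈ Set.Icc (0:ℝ) 1 := by
  obtain ⟨hγ0, hγ1⟩ := hγ
  obtain ⟨hP0, hP1⟩ := hP
  obtain ⟨hVd0, hVd1⟩ := hVd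
  intro v hv w hw
  obtain ⟨hv0, hv1⟩ := hv
  obtain ⟨hw0, hw1⟩ := hw
  have hden : (0:ℝ) < ν + γ ^ 2 := by nlinarith
  have hk : 1 - γ * (ν + γ) / (ν + γ ^ 2) = ν * (1 - γ) / (ν + γ ^ 2) := by
    field_simp
    ring
  set X : ℝ := ν * (1 - γ) / (ν + γ ^ 2) with hXdef
  have hX0 : 0 ≤ X := div_nonneg (by nlinarith) hden.le
  have hD0 := hDnonneg v ⟨hv0, hv1⟩
  have hDv := hD v ⟨hv0, hv1⟩
  have hmin1 : min v (1 - v) ≤ v := min_le_left _ _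
  have hmin2 : min v (1 - v) ≤ 1 - v := min_le_right _ _
  have hmin0 : 0 ≤ min v (1 - v) := le_min hv0 (by linarith)
  have hηb : |D v * η| ≤ min v (1 - v) * X := by
    rw [abs_mul, abs_of_nonneg hD0]
    calc D v * |η| ≤ D v * (c * X) := by
          apply mul_le_mul_of_nonneg_left _ hD0
          rw [← hk]; exact hη
      _ = (c * D v) * X := by ring
      _ ≤ min v (1 - v) * X := mul_le_mul_of_nonneg_right hDv hX0
  obtain ⟨hE1, hE2⟩ := abs_le.mp hηb
  have hE1' : -(v * X) ≤ D v * η := by nlinarith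
  have hE2' : D v * η ≤ (1 - v) * X := by nlinarith
  rcases hΘ with h0 | h1
  · subst h0
    have e1 : ν * γ / (ν + γ ^ 2 * 0 ^ 2) = γ := by
      rw [show γ ^ 2 * 0 ^ 2 = 0 by ring, add_zero, mul_comm,
        mul_div_assoc, div_self hν.ne', mul_one]
    have e2 : γ ^ 2 * 0 ^ 2 / (ν + γ ^ 2 * 0 ^ 2) = 0 := by
      rw [show γ ^ 2 * 0 ^ 2 = 0 by ring, zero_div]
    rw [e1, e2, zero_mul, add_zero]
    have hXγ : v * X ≤ v * (1 - γ) ∧ (1 - v) * X ≤ (1 - v) * (1 - γ) := by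
      have hXle : X ≤ 1 - γ := by
        rw [hXdef, div_le_iff₀ hden]
        nlinarith
      exact ⟨mul_le_mul_of_nonneg_left hXle hv0,
        mul_le_mul_of_nonneg_left hXle (by linarith)⟩
    obtain ⟨hXγ1, hXγ2⟩ := hXγ
    have heq : v + γ * (P * (1 - v) + (1 - P) * (P * w - v))
        = v * (1 - γ) + γ * (P + P * (1 - P) * w) := by ring
    have hlow : 0 ≤ γ * (P + P * (1 - P) * w) := by
      apply mul_nonneg hγ0
      have := mul_nonneg (mul_nonneg hP0 (sub_nonneg.2 hP1)) hw0
      linarith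
    have hup : γ * (P + P * (1 - P) * w) ≤ γ := by
      have h5 : P + P * (1 - P) * w ≤ 1 := by
        nlinarith [mul_nonneg (mul_nonneg hP0 (sub_nonneg.2 hP1)) (sub_nonneg.2 hw1),
          sq_nonneg (1 - P)]
      calc γ * (P + P * (1 - P) * w) ≤ γ * 1 := mul_le_mul_of_nonneg_left h5 hγ0
        _ = γ := mul_one γ
    have heq2 : v * (1 - γ) + γ = 1 - (1 - v) * (1 - γ) := by ring
    constructor
    · linarith
    · linarith
  · subst h1
    rw [show γ ^ 2 * 1 ^ 2 = γ ^ 2 by ring]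
    have hAB : 1 - ν * γ / (ν + γ ^ 2) - γ ^ 2 / (ν + γ ^ 2) = X := by
      rw [hXdef]
      field_simp
      ring
    set A : ℝ := ν * γ / (ν + γ ^ 2) with hAdef
    set B : ℝ := γ ^ 2 / (ν + γ ^ 2) with hBdef
    have hA0 : 0 ≤ A := div_nonneg (by nlinarith) hden.le
    have hB0 : 0 ≤ B := div_nonneg (by positivity) hden.le
    have h1 : A * (-v) ≤ A * (P * (1 - v) + (1 - P) * (P * w - v)) := by
      apply mul_le_mul_of_nonneg_left _ hA0
      nlinarith [mul_nonneg (mul_nonneg hP0 hw0) (sub_nonneg.2 hP1)]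
    have h1' : A * (P * (1 - v) + (1 - P) * (P * w - v)) ≤ A * (1 - v) := by
      apply mul_le_mul_of_nonneg_left _ hA0
      nlinarith [mul_nonneg (mul_nonneg (sub_nonneg.2 hP1) hP0) (sub_nonneg.2 hw1),
        sq_nonneg (1 - P)]
    have h2 : B * (-v) ≤ B * (Vd - v) := by
      apply mul_le_mul_of_nonneg_left _ hB0
      linarith
    have h2' : B * (Vd - v) ≤ B * (1 - v) := by
      apply mul_le_mul_of_nonneg_left _ hB0
      linarith
    have h3 : v * (1 - A - B) = v * X := by rw [hAB]
    have h3' : (1 - v) * (1 - A - B) = (1 - v) * X := by rw [hAB]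
    constructor
    · nlinarith [h1, h2, h3]
    · nlinarith [h1', h2', h3']
end

section
/- Let A, B, C ∈ ℝ, λ ≥ 0, a ∈ ℝ, p* ≥ 0. Let V, E, V*, E* : [0,∞) → ℝ be differentiable functions satisfying the ODEs: V' = (A+B)V + C; (V*)' = (A+B)V* + C; E' = 2(A·E + B·V² + C·V) + λa²(V − E); (E*)' = 2(A·E* + B·(V*)² + C·V*) + λa²(V* − E*) + 2p*((V*)² − E*). Assume E*(τ) ≥ (V*(τ))² for all τ ≥ 0, and assume the matching initial conditions V*(0) = V(0) and E*(0) = E(0). Then for all τ ≥ 0: V*(τ) = V(τ) and E*(τ) − (V*(τ))² ≤ E(τ) − V(τ)². -/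
/-!
Both mean-speed equations are the same linear ODE with the same initial value, so `Vs = V` by
uniqueness. Substituting this into the energy equations, the difference `Es - E` satisfies
`(Es - E)' = (2A - λa²)(Es - E) - 2p*(Es - Vs²) ≤ (2A - λa²)(Es - E)`, since `p* ≥ 0` and the
controlled variance `Es - Vs²` is nonnegative. Starting from `0`, Grönwall's inequality keeps
`Es - E ≤ 0`, which is the variance comparison.
-/

open Set

theorem nonpos_of_hasDerivAt_le_mul_self {f f' : ℝ → ℝ} {K a : ℝ}
    (hf : ∀ t ≥ a, HasDerivAt f (f' t) t) (bound : ∀ t ≥ a, f' t ≤ K * f t) (ha : f a ≤ 0) :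
    ∀ t ≥ a, f t ≤ 0 := by
  intro t ht
  have hcont : ContinuousOn f (Icc a t) := fun x hx => (hf x hx.1).continuousAt.continuousWithinAt
  have hslope : ∀ x ∈ Ico a t, ∀ r, f' x < r → ∃ᶠ z in nhdsWithin x (Ioi x),
      (z - x)⁻¹ * (f z - f x) < r :=
    fun x hx _ hr => (hf x hx.1).hasDerivWithinAt.liminf_right_slope_le hr
  have := le_gronwallBound_of_liminf_deriv_right_le (K := K) (ε := 0) hcont hslope ha
    (fun x hx => by rw [add_zero]; exact bound x hx.1) t ⟨ht, le_rfl⟩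
  rwa [gronwallBound_ε0_δ0] at this

theorem eq_of_hasDerivAt_affine {f g : ℝ → ℝ} {K c a : ℝ}
    (hf : ∀ t ≥ a, HasDerivAt f (K * f t + c) t) (hg : ∀ t ≥ a, HasDerivAt g (K * g t + c) t)
    (ha : f a = g a) : ∀ t ≥ a, f t = g t := by
  have hle : ∀ {u v : ℝ → ℝ}, (∀ t ≥ a, HasDerivAt u (K * u t + c) t) →
      (∀ t ≥ a, HasDerivAt v (K * v t + c) t) → u a = v a → ∀ t ≥ a, u t ≤ v t :=
    fun {u v} hu hv hauv t ht => sub_nonpos.mp <|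
      nonpos_of_hasDerivAt_le_mul_self (f := fun t => u t - v t) (K := K)
        (fun t ht => (hu t ht).sub (hv t ht)) (fun t _ => le_of_eq (by ring))
        (sub_nonpos.mpr hauv.le) t ht
  exact fun t ht => le_antisymm (hle hf hg ha t ht) (hle hg hf ha.symm t ht)

theorem binary_variance_control_general
    (A B C lam a pstar : ℝ) (hp : 0 ≤ pstar)
    (V E Vs Es : ℝ → ℝ)
    (hV : ∀ τ ≥ (0:ℝ), HasDerivAt V ((A + B) * V τ + C) τ)
    (hVs : ∀ τ ≥ (0:ℝ), HasDerivAt Vs ((A + B) * Vs τ + C) τ)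
    (hE : ∀ τ ≥ (0:ℝ),
      HasDerivAt E (2 * (A * E τ + B * (V τ) ^ 2 + C * V τ) + lam * a ^ 2 * (V τ - E τ)) τ)
    (hEs : ∀ τ ≥ (0:ℝ),
      HasDerivAt Es (2 * (A * Es τ + B * (Vs τ) ^ 2 + C * Vs τ) + lam * a ^ 2 * (Vs τ - Es τ)
        + 2 * pstar * ((Vs τ) ^ 2 - Es τ)) τ)
    (hvar : ∀ τ ≥ (0:ℝ), (Vs τ) ^ 2 ≤ Es τ)
    (hV0 : Vs 0 = V 0) (hE0 : Es 0 = E 0) :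
    ∀ τ ≥ (0:ℝ), Vs τ = V τ ∧ Es τ - (Vs τ) ^ 2 ≤ E τ - (V τ) ^ 2 := by
  have hmean : ∀ τ ≥ (0:ℝ), Vs τ = V τ := eq_of_hasDerivAt_affine hVs hV hV0
  have henergy : ∀ τ ≥ (0:ℝ), Es τ - E τ ≤ 0 := by
    refine nonpos_of_hasDerivAt_le_mul_self (K := 2 * A - lam * a ^ 2)
      (fun τ hτ => (hEs τ hτ).sub (hE τ hτ)) (fun τ hτ => ?_) (by simp [hE0])
    have hdamp : 0 ≤ pstar * (Es τ - Vs τ ^ 2) := mul_nonneg hp (sub_nonneg.mpr (hvar τ hτ))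
    rw [← hmean τ hτ]
    linarith
  intro τ hτ
  refine ⟨hmean τ hτ, ?_⟩
  rw [hmean τ hτ]
  linarith [henergy τ hτ]

/-- Theorem (binary variance control): the control leaves the mean speed unchanged
and does not increase the speed variance. -/
theorem binary_variance_control
    (A B C lam a pstar : ℝ) (hlam : 0 ≤ lam) (hp : 0 ≤ pstar)
    (V E Vs Es : ℝ → ℝ)
    (hV : ∀ τ ≥ (0:ℝ), HasDerivAt V ((A + B) * V τ + C) τ)
    (hVs : ∀ τ ≥ (0:ℝ), HasDerivAt Vs ((A + B) * Vs τ + C) τ)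
    (hE : ∀ τ ≥ (0:ℝ),
      HasDerivAt E (2 * (A * E τ + B * (V τ) ^ 2 + C * V τ) + lam * a ^ 2 * (V τ - E τ)) τ)
    (hEs : ∀ τ ≥ (0:ℝ),
      HasDerivAt Es (2 * (A * Es τ + B * (Vs τ) ^ 2 + C * Vs τ) + lam * a ^ 2 * (Vs τ - Es τ)
        + 2 * pstar * ((Vs τ) ^ 2 - Es τ)) τ)
    (hvar : ∀ τ ≥ (0:ℝ), (Vs τ) ^ 2 ≤ Es τ)
    (hV0 : Vs 0 = V 0) (hE0 : Es 0 = E 0) :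
    ∀ τ ≥ (0:ℝ), Vs τ = V τ ∧ Es τ - (Vs τ) ^ 2 ≤ E τ - (V τ) ^ 2 :=
  binary_variance_control_general A B C lam a pstar hp V E Vs Es hV hVs hE hEs hvar hV0 hE0
end

section
/- Let p* > 0, λ ≥ 0, I_max ≥ 0, D_max ≥ 0, and v_d ∈ [0,1]. Suppose V∞ ∈ [0,1] satisfies |V∞ − v_d| ≤ I_max/p*, and suppose E∞ ∈ ℝ satisfies E∞ = v_d·V∞ + A/p* + (λ/(2p*))·B for some A, B ∈ ℝ with |A| ≤ I_max and 0 ≤ B ≤ D_max². Then: (i) |E∞ − v_d²| ≤ (2·I_max + λ·D_max²/2)/p*, and (ii) E∞ − V∞² ≤ (4·I_max + λ·D_max²/2)/p*. -/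
/-- Theorem (desired speed control, asymptotic part): bounds on the equilibrium energy
and equilibrium speed variance. -/
theorem desired_speed_control_asymptotic
    (pstar lam Imax Dmax vd Vinf Einf A B : ℝ)
    (hp : 0 < pstar) (hlam : 0 ≤ lam) (hI : 0 ≤ Imax) (hDmax : 0 ≤ Dmax)
    (hvd : vd ∈ Set.Icc (0:ℝ) 1) (hVinf : Vinf ∈ Set.Icc (0:ℝ) 1)
    (hV : |Vinf - vd| ≤ Imax / pstar)
    (hE : Einf = vd * Vinf + A / pstar + (lam / (2 * pstar)) * B)
    (hA : |A| ≤ Imax) (hB0 : 0 ≤ B) (hB : B ≤ Dmax ^ 2) :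
    |Einf - vd ^ 2| ≤ (2 * Imax + lam * Dmax ^ 2 / 2) / pstar
    ∧ Einf - Vinf ^ 2 ≤ (4 * Imax + lam * Dmax ^ 2 / 2) / pstar := by
  obtain ⟨hvd0, hvd1⟩ := hvd
  obtain ⟨hV0, hV1⟩ := hVinf
  rw [abs_le] at hV hA
  have hLB : 0 ≤ lam / (2 * pstar) * B :=
    mul_nonneg (div_nonneg hlam (by linarith)) hB0
  have hLB' : lam / (2 * pstar) * B ≤ lam * Dmax ^ 2 / 2 / pstar := by
    rw [div_div]
    rw [div_mul_eq_mul_div, mul_comm (2:ℝ) pstar]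
    exact div_le_div_of_nonneg_right (by nlinarith [mul_le_mul_of_nonneg_left hB hlam]) (by positivity) |>.trans_eq rfl
  have hvdV : |vd * (Vinf - vd)| ≤ Imax / pstar := by
    rw [abs_mul]
    calc |vd| * |Vinf - vd| ≤ 1 * (Imax / pstar) := by
          apply mul_le_mul (by rw [abs_le]; constructor <;> linarith)
            (by rw [abs_le]; exact ⟨hV.1, hV.2⟩) (abs_nonneg _) zero_le_one
      _ = Imax / pstar := one_mul _
  rw [abs_le] at hvdV
  obtain ⟨hA1, hA2⟩ := hA
  have hAp : -(Imax / pstar) ≤ A / pstar ∧ A / pstar ≤ Imax / pstar := by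
    constructor
    · rw [← neg_div]; gcongr
    · gcongr
  constructor
  · rw [abs_le]
    constructor
    · have : (2 * Imax + lam * Dmax ^ 2 / 2) / pstar
        = Imax / pstar + Imax / pstar + lam * Dmax ^ 2 / 2 / pstar := by ring
      rw [this]
      nlinarith [hvdV.1, hAp.1]
    · have : (2 * Imax + lam * Dmax ^ 2 / 2) / pstar
        = Imax / pstar + Imax / pstar + lam * Dmax ^ 2 / 2 / pstar := by ring
      rw [this]
      nlinarith [hvdV.2, hAp.2]
  · have hvV : vd ^ 2 - Vinf ^ 2 ≤ 2 * (Imax / pstar) := by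
      have : vd ^ 2 - Vinf ^ 2 = (vd - Vinf) * (vd + Vinf) := by ring
      nlinarith [hV.1, hV.2]
    have : (4 * Imax + lam * Dmax ^ 2 / 2) / pstar
      = Imax / pstar + Imax / pstar + 2 * (Imax / pstar) + lam * Dmax ^ 2 / 2 / pstar := by ring
    rw [this]
    nlinarith [hvdV.2, hAp.2]
end

section
/- Let λ > 0, a > 0, V∞ ∈ (0,1), and set α := 2V∞/(λa²), β := 2(1−V∞)/(λa²). For any constant C > 0, the function f(v) := C·v^(α−1)·(1−v)^(β−1) satisfies, for every v ∈ (0,1), the stationary Fokker–Planck equation (λ/2)·d²/dv²[a²·v(1−v)·f(v)] − d/dv[(V∞ − v)·f(v)] = 0. -/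
/-!
The diffusion flux vanishes identically: for the beta profile `f`,
`(λ/2) · (a² v (1-v) f)' = (V∞ - v) f` on `(0,1)`, because
`(v^α (1-v)^β)' = (α (1-v) - β v) v^(α-1) (1-v)^(β-1)` and `α (1-v) - β v = 2 (V∞ - v) / (λ a²)`.
Differentiating this first-order identity once more gives the stationary equation.
-/

open Set Filter Topology

theorem hasDerivAt_rpow_mul_one_sub_rpow {p q v : ℝ} (hv : v ∈ Ioo (0 : ℝ) 1) :
    HasDerivAt (fun w => w ^ p * (1 - w) ^ q)
      ((p * (1 - v) - q * v) * (v ^ (p - 1) * (1 - v) ^ (q - 1))) v := by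
  have hv0 : v ≠ 0 := hv.1.ne'
  have hv1 : 1 - v ≠ 0 := (sub_pos.2 hv.2).ne'
  have hp := Real.hasDerivAt_rpow_const (p := p) (Or.inl hv0)
  have hq : HasDerivAt (fun w => (1 - w) ^ q) (q * (1 - v) ^ (q - 1) * -1) v :=
    (Real.hasDerivAt_rpow_const (p := q) (Or.inl hv1)).comp v
    ((hasDerivAt_id v).const_sub 1)
  refine (hp.mul hq).congr_deriv ?_
  rw [show v ^ p = v ^ (p - 1 + 1) by ring_nf, show (1 - v) ^ q = (1 - v) ^ (q - 1 + 1) by ring_nf,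
    Real.rpow_add_one hv0, Real.rpow_add_one hv1]
  ring

theorem hasDerivAt_mul_one_sub_mul_rpow_sub_one {p q v : ℝ} (hv : v ∈ Ioo (0 : ℝ) 1) :
    HasDerivAt (fun w => w * (1 - w) * (w ^ (p - 1) * (1 - w) ^ (q - 1)))
      ((p * (1 - v) - q * v) * (v ^ (p - 1) * (1 - v) ^ (q - 1))) v := by
  refine (hasDerivAt_rpow_mul_one_sub_rpow hv).congr_of_eventuallyEq ?_
  filter_upwards [Ioo_mem_nhds hv.1 hv.2] with w hw
  rw [show w ^ p = w ^ (p - 1 + 1) by ring_nf, show (1 - w) ^ q = (1 - w) ^ (q - 1 + 1) by ring_nf,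
    Real.rpow_add_one hw.1.ne', Real.rpow_add_one (sub_pos.2 hw.2).ne']
  ring

theorem beta_solves_stationary_FokkerPlanck_general
    (lam a Vinf C : ℝ) (hlam : 0 < lam) (ha : 0 < a)
    (α β : ℝ) (hα : α = 2 * Vinf / (lam * a ^ 2)) (hβ : β = 2 * (1 - Vinf) / (lam * a ^ 2))
    (f : ℝ → ℝ) (hf : ∀ v, f v = C * v ^ (α - 1) * (1 - v) ^ (β - 1)) :
    ∀ v ∈ Set.Ioo (0:ℝ) 1,
      (lam / 2) * deriv (deriv (fun v => a ^ 2 * v * (1 - v) * f v)) v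
        - deriv (fun v => (Vinf - v) * f v) v = 0 := by
  intro v hv
  have hdiffusion : (fun w => a ^ 2 * w * (1 - w) * f w)
      = fun w => a ^ 2 * C * (w * (1 - w) * (w ^ (α - 1) * (1 - w) ^ (β - 1))) := by
    funext w; rw [hf]; ring
  have hzero_flux : deriv (fun w => a ^ 2 * w * (1 - w) * f w)
      =ᶠ[𝓝 v] fun w => 2 / lam * ((Vinf - w) * f w) := by
    filter_upwards [Ioo_mem_nhds hv.1 hv.2] with w hw
    rw [hdiffusion, ((hasDerivAt_mul_one_sub_mul_rpow_sub_one hw).const_mul (a ^ 2 * C)).deriv,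
      hf, hα, hβ]
    field_simp
    ring
  rw [hzero_flux.deriv_eq, deriv_const_mul_field']
  field_simp
  ring

/-- The beta-type profile solves the stationary Fokker–Planck equation on (0,1). -/
theorem beta_solves_stationary_FokkerPlanck
    (lam a Vinf C : ℝ) (hlam : 0 < lam) (ha : 0 < a)
    (hVinf : Vinf ∈ Set.Ioo (0:ℝ) 1) (hC : 0 < C)
    (α β : ℝ) (hα : α = 2 * Vinf / (lam * a ^ 2)) (hβ : β = 2 * (1 - Vinf) / (lam * a ^ 2))
    (f : ℝ → ℝ) (hf : ∀ v, f v = C * v ^ (α - 1) * (1 - v) ^ (β - 1)) :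
    ∀ v ∈ Set.Ioo (0:ℝ) 1,
      (lam / 2) * deriv (deriv (fun v => a ^ 2 * v * (1 - v) * f v)) v
        - deriv (fun v => (Vinf - v) * f v) v = 0 :=
  beta_solves_stationary_FokkerPlanck_general lam a Vinf C hlam ha α β hα hβ f hf
end

section
/- Let a > 0 and γ > 0, and define the truncated diffusion coefficient D_γ(v) := a·√(max{(1+γ)·v·(1−v) − γ/4, 0}) and c := (1/a)·√(γ/(1+γ)). Then c·D_γ(v) ≤ min{v, 1−v} for all v ∈ [0,1]. -/
/-- The truncated diffusion coefficient satisfies the hypothesis of Proposition 2.1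
with `c = (1/a)·√(γ/(1+γ))`. -/
theorem truncated_diffusion_bound
    (a γ : ℝ) (ha : 0 < a) (hγ : 0 < γ)
    (Dγ : ℝ → ℝ)
    (hD : ∀ v, Dγ v = a * Real.sqrt (max ((1 + γ) * v * (1 - v) - γ / 4) 0))
    (c : ℝ) (hc : c = (1 / a) * Real.sqrt (γ / (1 + γ))) :
    ∀ v ∈ Set.Icc (0:ℝ) 1, c * Dγ v ≤ min v (1 - v) := by
  intro v hv
  obtain ⟨h0, h1⟩ := hv
  set m := min v (1 - v) with hm
  have hm0 : 0 ≤ m := le_min h0 (by linarith)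
  have h1γ : (0:ℝ) < 1 + γ := by linarith
  have key : γ / (1 + γ) * max ((1 + γ) * v * (1 - v) - γ / 4) 0 ≤ m ^ 2 := by
    rcases max_cases ((1 + γ) * v * (1 - v) - γ / 4) 0 with ⟨he, _⟩ | ⟨he, _⟩
    · rw [he, div_mul_eq_mul_div, div_le_iff₀ h1γ]
      rcases min_cases v (1 - v) with ⟨hme, _⟩ | ⟨hme, _⟩ <;> rw [hm, hme] <;>
        nlinarith [sq_nonneg ((1 + γ) * v - γ / 2), sq_nonneg ((1 + γ) * (1 - v) - γ / 2)]
    · rw [he, mul_zero]; positivity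
  have hrw : c * Dγ v
      = Real.sqrt (γ / (1 + γ) * max ((1 + γ) * v * (1 - v) - γ / 4) 0) := by
    rw [hD, hc, Real.sqrt_mul (by positivity)]
    field_simp
  rw [hrw]
  calc Real.sqrt (γ / (1 + γ) * max ((1 + γ) * v * (1 - v) - γ / 4) 0)
      ≤ Real.sqrt (m ^ 2) := Real.sqrt_le_sqrt key
    _ = m := by rw [Real.sqrt_sq hm0]
end
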